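/- A partial function A^A ⇀ A is of the form φ_α (defined by interrogations) for some α ∈ A^A if and only if it is partial sequential. -/

import Mathlib

open Classical

noncomputable section

namespace OostenK2

universe u

/-! ### Finite partial functions -/

/-- Finite partial functions `A ⇀ A`, as finite functional graphs,
ordered by inclusion of graphs. -/
abbrev FPF (A : Type u) : Type u :=
  {p : Set (A × A) // (∀ ⦃a b b'⦄, (a, b) ∈ p → (a, b') ∈ p → b = b') ∧ p.Finite}

variable {A : Type u}

/-- The domain of a finite partial function. -/
def FPF.dom (p : FPF A) : Set A := Prod.fst '' p.val

/-- The empty finite partial function (the root of sequential trees). -/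
def FPF.empty (A : Type u) : FPF A :=
  ⟨∅, fun _ _ _ h => absurd h (Set.notMem_empty _), Set.finite_empty⟩

/-- A total function `α` extends the finite partial function `p`. -/
def agrees (α : A → A) (p : FPF A) : Prop := ∀ ⦃a b⦄, (a, b) ∈ p.val → α a = b

/-- A partial function `β` extends the finite partial function `p`. -/
def agreesP (β : A → Option A) (p : FPF A) : Prop :=
  ∀ ⦃a b⦄, (a, b) ∈ p.val → β a = some b

/-- Two finite partial functions are compatible if their union is a function. -/
def compatFPF (s t : FPF A) : Prop :=
  ∀ ⦃a b b'⦄, (a, b) ∈ s.val → (a, b') ∈ t.val → b = b'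

/-! ### Trees -/

section Trees

variable {X : Type*} [PartialOrder X]

/-- A leaf of `T`: an element of `T` with no strict extension in `T`. -/
def IsLeaf (T : Set X) (p : X) : Prop := p ∈ T ∧ ¬∃ q ∈ T, p < q

/-- `q` is an immediate successor of `p` in `T`. -/
def ImmSucc (T : Set X) (p q : X) : Prop :=
  q ∈ T ∧ p < q ∧ ¬∃ t ∈ T, p < t ∧ t < q

/-- `T` is a tree with root `root`: the root belongs to `T`, lies below every
element, and the predecessors of any element form a chain. -/
def IsTreeOn (root : X) (T : Set X) : Prop :=
  root ∈ T ∧ (∀ p ∈ T, root ≤ p) ∧ ∀ p ∈ T, IsChain (· ≤ ·) {t | t ∈ T ∧ t ≤ p}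

/-- A tree is well-founded iff it has no infinite strictly increasing path. -/
def WellFoundedTree (T : Set X) : Prop :=
  ¬∃ f : ℕ → X, (∀ n, f n ∈ T) ∧ StrictMono f

end Trees

/-- A sequential tree: a tree of finite partial functions, rooted at the empty
function, in which all immediate successors of a non-leaf `p` have domain
`dom p ∪ {a}` for a single `a ∉ dom p`. -/
def IsSeqTree (T : Set (FPF A)) : Prop :=
  IsTreeOn (FPF.empty A) T ∧
  ∀ p ∈ T, ¬IsLeaf T p →
    ∃ a ∉ FPF.dom p, ∀ q, ImmSucc T p q → FPF.dom q = insert a (FPF.dom p)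

/-- A total sequential tree: the immediate successors of a non-leaf `p` are
*all* extensions of `p` with domain `dom p ∪ {a}`. -/
def IsTotalSeqTree (T : Set (FPF A)) : Prop :=
  IsTreeOn (FPF.empty A) T ∧
  ∀ p ∈ T, ¬IsLeaf T p →
    ∃ a ∉ FPF.dom p,
      ∀ q : FPF A, ImmSucc T p q ↔ p < q ∧ FPF.dom q = insert a (FPF.dom p)

/-- `Φ` (as a relation `(A → A) → A → Prop`) is a partial sequential function:
`Φ α = b` iff the path of `α` through some total sequential tree `T` ends in a
leaf `v` with `F v = b`. -/
def SeqRel (Φ : (A → A) → A → Prop) : Prop :=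
  ∃ (T : Set (FPF A)) (F : FPF A → A), IsTotalSeqTree T ∧
    ∀ α b, Φ α b ↔ ∃ v, IsLeaf T v ∧ agrees α v ∧ F v = b

/-- A total bisequential tree: pairs of finite partial functions ordered by
pairwise inclusion; at every non-leaf, either the first or the second component
is interrogated at a single new argument, with all possible answers present. -/
def IsTotalBiTree (T : Set (FPF A × FPF A)) : Prop :=
  IsTreeOn (FPF.empty A, FPF.empty A) T ∧
  ∀ p ∈ T, ¬IsLeaf T p →
    (∃ a ∉ FPF.dom p.1, ∀ q : FPF A × FPF A,
        ImmSucc T p q ↔ q.2 = p.2 ∧ p.1 ≤ q.1 ∧ FPF.dom q.1 = insert a (FPF.dom p.1)) ∨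
    (∃ b ∉ FPF.dom p.2, ∀ q : FPF A × FPF A,
        ImmSucc T p q ↔ q.1 = p.1 ∧ p.2 ≤ q.2 ∧ FPF.dom q.2 = insert b (FPF.dom p.2))

/-- `G` is a total bisequential function. -/
def BiSeqTotal (G : (A → A) → (A → A) → A) : Prop :=
  ∃ (T : Set (FPF A × FPF A)) (F : FPF A × FPF A → A), IsTotalBiTree T ∧
    ∀ α β, ∃ v, IsLeaf T v ∧ agrees α v.1 ∧ agrees β v.2 ∧ G α β = F v

/-! ### Interrogations (total functions)

Throughout, `mk : List A → A` is an injective coding of finite sequences,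
`qp b` is the code `⟨q,b⟩` of a query and `rp c` the code `⟨r,c⟩` of a result. -/

/-- `L` is an interrogation of `β` by `α`. -/
def Interrog (mk : List A → A) (qp : A → A) (α β : A → A) (L : List A) : Prop :=
  ∀ j (hj : j < L.length), ∃ b, α (mk (L.take j)) = qp b ∧ β b = L[j]'hj

/-- `φ_α(β) = c` via interrogations. -/
def phiRel (mk : List A → A) (qp rp : A → A) (α β : A → A) (c : A) : Prop :=
  ∃ L, Interrog mk qp α β L ∧ α (mk L) = rp c

/-- `L` is an `a`-interrogation of `β` by `α`. -/
def AInterrog (mk : List A → A) (qp : A → A) (a : A) (α β : A → A) (L : List A) : Prop :=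
  ∀ j (hj : j < L.length), ∃ b, α (mk (a :: L.take j)) = qp b ∧ β b = L[j]'hj

/-- `φ^a(α,β) = c` via `a`-interrogations. -/
def phiA (mk : List A → A) (qp rp : A → A) (a : A) (α β : A → A) (c : A) : Prop :=
  ∃ L, AInterrog mk qp a α β L ∧ α (mk (a :: L)) = rp c

/-- The application of `K₂(A)`: `αβ` is defined with value `γ` iff
`φ^a(α,β) = γ a` for every `a`. -/
def AppRel (mk : List A → A) (qp rp : A → A) (α β γ : A → A) : Prop :=
  ∀ a, phiA mk qp rp a α β (γ a)

/-! ### Partial combinatory algebras (abstractly) -/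

/-- A set with a partial binary application. -/
structure PCAStruct (X : Type*) where
  app : X → X → Part X

/-- Extension of the application to `Part`; `Part`-equality is Kleene equality. -/
def pap {X : Type*} (S : PCAStruct X) (u v : Part X) : Part X :=
  u.bind fun a => v.bind fun b => S.app a b

/-- `S` is a partial combinatory algebra: there are `k`, `s` with
`kxy = x` (everywhere defined), `sxy` defined, and `sxyz ≃ (xz)(yz)`. -/
def IsPCA {X : Type*} (S : PCAStruct X) : Prop :=
  ∃ k s : X,
    (∀ x y : X, pap S (S.app k x) (Part.some y) = Part.some x) ∧
    (∀ x y : X, (pap S (S.app s x) (Part.some y)).Dom) ∧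
    (∀ x y z : X,
      pap S (pap S (S.app s x) (Part.some y)) (Part.some z)
        = pap S (S.app x z) (S.app y z))

/-- `t`, `f` are Booleans of `S`: distinct, with a definition-by-cases combinator. -/
def IsBooleans {X : Type*} (S : PCAStruct X) (t f : X) : Prop :=
  t ≠ f ∧ ∃ C : X, ∀ a b : X,
    pap S (pap S (S.app C t) (Part.some a)) (Part.some b) = Part.some a ∧
    pap S (pap S (S.app C f) (Part.some a)) (Part.some b) = Part.some b

/-- Applicative morphism `γ : S → T`: a total relation such that some realizer
`r` tracks application. -/
def IsAppMor {X Y : Type*} (S : PCAStruct X) (T : PCAStruct Y) (γ : X → Set Y) : Prop :=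
  (∀ x, (γ x).Nonempty) ∧
  ∃ r : Y, ∀ x x' z : X, z ∈ S.app x x' → ∀ b ∈ γ x, ∀ b' ∈ γ x',
    ∃ w, w ∈ pap T (T.app r b) (Part.some b') ∧ w ∈ γ z

/-- The preorder on applicative morphisms. -/
def morLE {X Y : Type*} (T : PCAStruct Y) (γ γ' : X → Set Y) : Prop :=
  ∃ s : Y, ∀ x : X, ∀ b ∈ γ x, ∃ c, c ∈ T.app s b ∧ c ∈ γ' x

def morEquiv {X Y : Type*} (T : PCAStruct Y) (γ γ' : X → Set Y) : Prop :=
  morLE T γ γ' ∧ morLE T γ' γ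

/-- Composition of applicative morphisms (as total relations). -/
def morComp {X Y Z : Type*} (γ : X → Set Y) (ε : Y → Set Z) : X → Set Z :=
  fun x => ⋃ y ∈ γ x, ε y

/-- Decidability of a morphism w.r.t. chosen Booleans. -/
def IsDecidableMor {X Y : Type*} (T : PCAStruct Y) (γ : X → Set Y)
    (tX fX : X) (tY fY : Y) : Prop :=
  ∃ d : Y, (∀ b ∈ γ tX, T.app d b = Part.some tY) ∧
    (∀ b ∈ γ fX, T.app d b = Part.some fY)

/-- `rf` represents the partial function `f : X ⇀ X` w.r.t. `γ`. -/
def RepresentsPFun {X Y : Type*} (T : PCAStruct Y) (γ : X → Set Y)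
    (f : X → Option X) (rf : Y) : Prop :=
  ∀ a x, f a = some x → ∀ b ∈ γ a, ∃ c, c ∈ T.app rf b ∧ c ∈ γ x

/-- The pca `K₂(A)` on `A^A` (application via `a`-interrogations). -/
def K2 (mk : List A → A) (qp rp : A → A) : PCAStruct (A → A) where
  app α β := ⟨∀ a, ∃ c, phiA mk qp rp a α β c, fun h a => (h a).choose⟩

/-! ### Interrogations for partial functions -/

/-- Interrogation of a partial `β` by a partial `α`. -/
def PInterrog (mk : List A → A) (qp : A → A) (α β : A → Option A) (L : List A) : Prop :=
  ∀ j (hj : j < L.length), ∃ b, α (mk (L.take j)) = some (qp b) ∧ β b = some (L[j]'hj)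

/-- `φ_α(β) = c` for partial functions. -/
def phiPRel (mk : List A → A) (qp rp : A → A) (α β : A → Option A) (c : A) : Prop :=
  ∃ L, PInterrog mk qp α β L ∧ α (mk L) = some (rp c)

/-- `a`-interrogation of a partial `β` by a partial `α`. -/
def PAInterrog (mk : List A → A) (qp : A → A) (a : A) (α β : A → Option A)
    (L : List A) : Prop :=
  ∀ j (hj : j < L.length), ∃ b, α (mk (a :: L.take j)) = some (qp b) ∧ β b = some (L[j]'hj)

/-- `φ^a(α,β) = c` for partial functions. -/
def phiPA (mk : List A → A) (qp rp : A → A) (a : A) (α β : A → Option A) (c : A) : Prop :=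
  ∃ L, PAInterrog mk qp a α β L ∧ α (mk (a :: L)) = some (rp c)

/-- The (total!) application of `K₂^p(A)` on partial functions. -/
def K2pApp (mk : List A → A) (qp rp : A → A) (α β : A → Option A) : A → Option A :=
  fun a => if h : ∃ c, phiPA mk qp rp a α β c then some h.choose else none

/-- `K₂^p(A)` as a `PCAStruct` (with everywhere-defined application). -/
def K2p (mk : List A → A) (qp rp : A → A) : PCAStruct (A → Option A) :=
  ⟨fun α β => Part.some (K2pApp mk qp rp α β)⟩

/-! ### A pca with standard structure (Booleans, pairing, tuple coding, recursion) -/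

/-- A pca together with the standard derived structure: Booleans with a case
combinator, pairing, an injective standard tuple coding with combinators
manipulating it, and a fixed-point combinator. All of these exist in any
(nontrivial) pca. -/
structure StdPCA (A : Type u) where
  S : PCAStruct A
  isPCA : IsPCA S
  t : A
  f : A
  t_ne_f : t ≠ f
  Cc : A
  C_t : ∀ a b : A, pap S (pap S (S.app Cc t) (Part.some a)) (Part.some b) = Part.some a
  C_f : ∀ a b : A, pap S (pap S (S.app Cc f) (Part.some a)) (Part.some b) = Part.some b
  pairF : A → A → A
  Pc : A
  P0 : A
  P1 : A
  P_spec : ∀ x y : A, pap S (S.app Pc x) (Part.some y) = Part.some (pairF x y)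
  P0_spec : ∀ x y : A, S.app P0 (pairF x y) = Part.some x
  P1_spec : ∀ x y : A, S.app P1 (pairF x y) = Part.some y
  tup : List A → A
  tup_inj : Function.Injective tup
  CONS : A
  CONS_spec : ∀ (x : A) (L : List A),
    pap S (S.app CONS x) (Part.some (tup L)) = Part.some (tup (x :: L))
  SNOC : A
  SNOC_spec : ∀ (L : List A) (y : A),
    pap S (S.app SNOC (tup L)) (Part.some y) = Part.some (tup (L ++ [y]))
  Zc : A
  Z_spec : ∀ g : A, (S.app Zc g).Dom ∧ ∀ zg ∈ S.app Zc g, ∀ x : A,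
    S.app zg x = pap S (S.app g zg) (Part.some x)

/-- The partial function `x ↦ a·x` represented by `a ∈ A`. -/
def abar (P : StdPCA A) (a : A) : A → Option A :=
  fun x => if h : (P.S.app a x).Dom then some ((P.S.app a x).get h) else none

/-- An `x`-interrogation of the oracle `g : A ⇀ A` by `a ∈ A`, inside the pca. -/
def OInterrog (P : StdPCA A) (g : A → Option A) (a x : A) (L : List A) : Prop :=
  ∀ j (hj : j < L.length), ∃ v,
    P.S.app a (P.tup (x :: L.take j)) = Part.some (P.pairF P.f v) ∧ g v = some (L[j]'hj)

/-- The oracle application of `A[g]` : `a ·^g x = c`. -/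
def oapp (P : StdPCA A) (g : A → Option A) (a x c : A) : Prop :=
  ∃ L, OInterrog P g a x L ∧ P.S.app a (P.tup (x :: L)) = Part.some (P.pairF P.t c)

/-- `fn ≤_T g` : `fn` is representable in `A[g]`. -/
def leT (P : StdPCA A) (fn g : A → Option A) : Prop :=
  ∃ a : A, ∀ x y, fn x = some y → oapp P g a x y

/-- `j` is the join `f ⊔ g`. -/
def JoinSpec (P : StdPCA A) (f g j : A → Option A) : Prop :=
  (∀ x, j (P.pairF P.t x) = f x) ∧ (∀ x, j (P.pairF P.f x) = g x) ∧
  (∀ y, (∀ x, y ≠ P.pairF P.t x ∧ y ≠ P.pairF P.f x) → j y = none)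

/-- `K₂(A)` (built from the coding `mk`, `q`, `r`) is compatible with the pca
structure on `A`: elements of `A` translate between the codings and between
`q, r` and `⊥, ⊤`. -/
def CompatCoding (P : StdPCA A) (mk : List A → A) (q r : A) : Prop :=
  (∃ a : A, ∀ L, P.S.app a (mk L) = Part.some (P.tup L)) ∧
  (∃ b : A, ∀ L, P.S.app b (P.tup L) = Part.some (mk L)) ∧
  (∃ c : A, P.S.app c q = Part.some P.f ∧ P.S.app c r = Part.some P.t)

/-! Both sides are described by *query strategies* `sel : FPF A → Option A`, which at a
node `p` either name an argument `a ∉ dom p` to be queried next or stop (`none`).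

The nodes visited by the walks of all `β : A → A` under `sel` form a total sequential tree
whose leaves are the nodes where `sel` stops; conversely every total sequential tree is the
tree of the strategy "query where `T` branches". So the partial sequential functions are
exactly the functions computed by strategies with leaf labels.

A strategy with labels becomes an `α` by answering the code of an answer list with the query
(or the label) at the node that list leads to. Conversely, the strategy of `α` at `p` asks
what `α` asks next when interrogating `p`, and stops where `α` returns. Where `α` does
neither, it keeps querying fresh dummy arguments (here `A` must be infinite), so that such
nodes are not leaves. When `φ_α(β)` is defined, the walk of `β` queries only the finitely
many arguments of the interrogation, each at most once, so it reaches a leaf. -/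

namespace FPF

variable {A : Type u}

theorem mem_dom_iff {p : FPF A} {a : A} : a ∈ p.dom ↔ ∃ x, (a, x) ∈ p.val := by
  simp [FPF.dom]

theorem dom_finite (p : FPF A) : p.dom.Finite := p.prop.2.image _

theorem dom_mono {p t : FPF A} (h : p ≤ t) : p.dom ⊆ t.dom := Set.image_mono h

theorem empty_le (p : FPF A) : FPF.empty A ≤ p := Set.empty_subset _

theorem eq_of_le_of_dom_subset {s t : FPF A} (hst : s ≤ t) (hdom : t.dom ⊆ s.dom) :
    s = t := by
  refine le_antisymm hst fun ⟨a, x⟩ hx => ?_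
  obtain ⟨y, hy⟩ := mem_dom_iff.1 (hdom (mem_dom_iff.2 ⟨x, hx⟩))
  rwa [t.prop.1 hx (hst hy)]

theorem finite_Iic (v : FPF A) : (Set.Iic v).Finite :=
  v.prop.2.finite_subsets.preimage Subtype.val_injective.injOn

def adjoin (p : FPF A) (a x : A) : FPF A :=
  if h : a ∈ p.dom then p
  else ⟨insert (a, x) p.val, by
    rintro b y y' (hy | hy) (hy' | hy')
    · simp_all
    · simp only [Prod.mk.injEq] at hy; exact absurd (mem_dom_iff.2 ⟨y', hy.1 ▸ hy'⟩) h
    · simp only [Prod.mk.injEq] at hy'; exact absurd (mem_dom_iff.2 ⟨y, hy'.1 ▸ hy⟩) h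
    · exact p.prop.1 hy hy', p.prop.2.insert _⟩

variable {p s t : FPF A} {a x : A}

theorem adjoin_val (ha : a ∉ p.dom) : (p.adjoin a x).val = insert (a, x) p.val := by
  simp [adjoin, ha]

theorem le_adjoin : p ≤ p.adjoin a x := by
  unfold adjoin
  split_ifs
  exacts [le_rfl, Set.subset_insert _ _]

theorem mem_adjoin (ha : a ∉ p.dom) : (a, x) ∈ (p.adjoin a x).val := by
  simp [adjoin_val ha]

theorem lt_adjoin (ha : a ∉ p.dom) : p < p.adjoin a x :=
  lt_of_le_of_ne le_adjoin fun h => ha (mem_dom_iff.2 ⟨x, h ▸ mem_adjoin ha⟩)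

theorem dom_adjoin (ha : a ∉ p.dom) : (p.adjoin a x).dom = insert a p.dom := by
  simp [FPF.dom, adjoin_val ha, Set.image_insert_eq]

theorem eq_adjoin (ha : a ∉ p.dom) (hpt : p ≤ t) (hdom : t.dom = insert a p.dom)
    (hx : (a, x) ∈ t.val) : t = p.adjoin a x := by
  refine (eq_of_le_of_dom_subset ?_ ?_).symm
  · rw [← Subtype.coe_le_coe, adjoin_val ha]
    exact Set.insert_subset hx hpt
  · rw [hdom, dom_adjoin ha]

theorem eq_or_eq_of_dom_eq_insert (hps : p ≤ s) (hst : s ≤ t)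
    (hdom : t.dom = insert a p.dom) : s = p ∨ s = t := by
  by_cases has : a ∈ s.dom
  · exact Or.inr (eq_of_le_of_dom_subset hst (hdom ▸ Set.insert_subset has (dom_mono hps)))
  · refine Or.inl (eq_of_le_of_dom_subset hps fun b hb => ?_).symm
    have hbt := dom_mono hst hb
    rw [hdom] at hbt
    exact hbt.resolve_left fun hba => has (hba ▸ hb)

def fresh [Infinite A] (p : FPF A) : A := p.dom_finite.exists_notMem.choose

theorem fresh_notMem [Infinite A] (p : FPF A) : p.fresh ∉ p.dom :=
  p.dom_finite.exists_notMem.choose_spec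

def toFun (p : FPF A) (a : A) : A := if h : ∃ x, (a, x) ∈ p.val then h.choose else a

theorem agrees_toFun (p : FPF A) : agrees p.toFun p := fun a x hx => by
  have h : ∃ x, (a, x) ∈ p.val := ⟨x, hx⟩
  simp only [toFun, dif_pos h]
  exact p.prop.1 h.choose_spec hx

end FPF

variable {A : Type u}

theorem agrees.mono {β : A → A} {s t : FPF A} (h : agrees β t) (hst : s ≤ t) : agrees β s :=
  fun _ _ hx => h (hst hx)

theorem agrees_empty (β : A → A) : agrees β (FPF.empty A) :=
  fun _ _ h => absurd h (Set.notMem_empty _)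

section Walk

variable (sel : FPF A → Option A)

def QueriesFresh : Prop := ∀ p a, sel p = some a → a ∉ FPF.dom p

def step (p : FPF A) (f : A → A) : FPF A :=
  match sel p with
  | some a => p.adjoin a (f a)
  | none => p

/-- The path of `β` through the tree of `sel`. -/
def walk (β : A → A) : ℕ → FPF A
  | 0 => FPF.empty A
  | n + 1 => step sel (walk β n) β

def listWalk (L : List A) : FPF A :=
  L.foldl (fun p x => step sel p fun _ => x) (FPF.empty A)

def treeOf : Set (FPF A) := {p | ∃ β n, walk sel β n = p}

/-- The partial function `Φ_{T,F}` for the tree `T` of `sel`. -/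
def walkValue (F : FPF A → A) (β : A → A) (c : A) : Prop :=
  ∃ n, sel (walk sel β n) = none ∧ F (walk sel β n) = c

variable {sel} {β γ : A → A} {p : FPF A} {a : A}

theorem step_of_some (h : sel p = some a) (f : A → A) : step sel p f = p.adjoin a (f a) := by
  simp [step, h]

theorem step_of_none (h : sel p = none) (f : A → A) : step sel p f = p := by
  simp [step, h]

theorem listWalk_append_singleton (L : List A) (x : A) :
    listWalk sel (L ++ [x]) = step sel (listWalk sel L) fun _ => x := by
  simp [listWalk]

theorem monotone_walk : Monotone (walk sel β) := by
  refine monotone_nat_of_le_succ fun n => ?_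
  show _ ≤ step sel _ β
  unfold step
  split
  exacts [FPF.le_adjoin, le_rfl]

theorem agrees_walk (hsel : QueriesFresh sel) : ∀ n, agrees β (walk sel β n)
  | 0 => agrees_empty β
  | n + 1 => by
    show agrees β (step sel _ β)
    unfold step
    split
    · next a ha =>
      intro b x hx
      rw [FPF.adjoin_val (hsel _ a ha)] at hx
      rcases hx with hx | hx
      · simp only [Prod.mk.injEq] at hx
        rw [hx.1, hx.2]
      · exact agrees_walk hsel n hx
    · exact agrees_walk hsel n

theorem mem_dom_walk_succ (hsel : QueriesFresh sel) {n : ℕ} (h : sel (walk sel β n) = some a) :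
    a ∈ (walk sel β (n + 1)).dom :=
  FPF.mem_dom_iff.2
    ⟨β a, by simpa only [walk, step_of_some h] using FPF.mem_adjoin (hsel _ a h)⟩

theorem walk_eq_of_agrees (hsel : QueriesFresh sel) {n : ℕ}
    (h : agrees γ (walk sel β n)) : walk sel γ n = walk sel β n := by
  induction n with
  | zero => rfl
  | succ n ih =>
    show step sel _ γ = step sel _ β
    rw [ih (h.mono (monotone_walk n.le_succ))]
    rcases hs : sel (walk sel β n) with _ | a
    · simp only [step_of_none hs]
    · obtain ⟨x, hx⟩ := FPF.mem_dom_iff.1 (mem_dom_walk_succ hsel hs)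
      rw [step_of_some hs, step_of_some hs, h hx, ← agrees_walk hsel (n + 1) hx]

theorem walk_eq_of_sel_eq_none {m n : ℕ} (h : sel (walk sel β m) = none) (hmn : m ≤ n) :
    walk sel β n = walk sel β m := by
  induction n, hmn using Nat.le_induction with
  | base => rfl
  | succ n _ ih => rw [← ih] at h ⊢; exact step_of_none h β

theorem exists_sel_walk_eq_none (hsel : QueriesFresh sel) {S : Set A} (hS : S.Finite)
    (h : ∀ n a, sel (walk sel β n) = some a → a ∈ S) :
    ∃ n, sel (walk sel β n) = none := by
  by_contra! hne
  choose f hf using fun n => Option.ne_none_iff_exists'.1 (hne n)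
  have hinj : f.Injective := Function.Injective.of_lt_imp_ne fun m n hmn hfmn =>
    hsel _ _ (hf n) (hfmn ▸ FPF.dom_mono (monotone_walk hmn) (mem_dom_walk_succ hsel (hf m)))
  exact Set.infinite_range_of_injective hinj
    (hS.subset (Set.range_subset_iff.2 fun n => h n _ (hf n)))

end Walk

section TreeOf

variable {sel : FPF A → Option A} (hsel : QueriesFresh sel) {β : A → A} {p t : FPF A} {a : A}
include hsel

theorem exists_walk_eq_of_agrees (ht : t ∈ treeOf sel) (hβ : agrees β t) :
    ∃ n, walk sel β n = t := by
  obtain ⟨γ, n, rfl⟩ := ht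
  exact ⟨n, walk_eq_of_agrees hsel hβ⟩

theorem adjoin_mem_treeOf (hp : p ∈ treeOf sel) (ha : sel p = some a) (x : A) :
    p.adjoin a x ∈ treeOf sel := by
  have hx := FPF.mem_adjoin (x := x) (hsel p a ha)
  obtain ⟨n, hn⟩ := exists_walk_eq_of_agrees hsel hp
    ((FPF.agrees_toFun (p.adjoin a x)).mono FPF.le_adjoin)
  refine ⟨(p.adjoin a x).toFun, n + 1, ?_⟩
  rw [walk, hn, step_of_some ha, FPF.agrees_toFun _ hx]

theorem immSucc_treeOf_iff (hp : p ∈ treeOf sel) (ha : sel p = some a) :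
    ImmSucc (treeOf sel) p t ↔ p < t ∧ t.dom = insert a p.dom := by
  have ha' := hsel p a ha
  constructor
  · rintro ⟨ht, hpt, hnot⟩
    -- the walk of (an extension of) `t` passes through `p`, and its next node is below `t`
    set δ := t.toFun
    obtain ⟨n, hn⟩ := exists_walk_eq_of_agrees hsel hp ((FPF.agrees_toFun t).mono hpt.le)
    obtain ⟨m, hm⟩ := exists_walk_eq_of_agrees hsel ht (FPF.agrees_toFun t)
    have hnm : n < m := lt_of_not_ge fun hmn =>
      ((hn.trans_lt hpt).trans_eq hm.symm).not_ge (monotone_walk hmn)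
    have hsucc : walk sel δ (n + 1) = p.adjoin a (δ a) := by rw [walk, hn, step_of_some ha]
    have heq : walk sel δ (n + 1) = t := (hm ▸ monotone_walk hnm).eq_of_not_lt fun hlt =>
      hnot ⟨_, ⟨δ, n + 1, rfl⟩, hsucc ▸ FPF.lt_adjoin ha', hlt⟩
    exact ⟨hpt, by rw [← heq, hsucc, FPF.dom_adjoin ha']⟩
  · rintro ⟨hpt, hdom⟩
    obtain ⟨x, hx⟩ := FPF.mem_dom_iff.1 (hdom ▸ Set.mem_insert a p.dom)
    obtain rfl := FPF.eq_adjoin ha' hpt.le hdom hx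
    refine ⟨adjoin_mem_treeOf hsel hp ha x, hpt, ?_⟩
    rintro ⟨s, -, hps, hst⟩
    rcases FPF.eq_or_eq_of_dom_eq_insert hps.le hst.le hdom with rfl | rfl
    exacts [hps.ne rfl, hst.ne rfl]

theorem isLeaf_treeOf_iff : IsLeaf (treeOf sel) p ↔ p ∈ treeOf sel ∧ sel p = none := by
  refine ⟨fun ⟨hp, hmax⟩ => ⟨hp, ?_⟩, fun ⟨hp, hnone⟩ => ⟨hp, ?_⟩⟩
  · rcases hs : sel p with _ | a
    · rfl
    · exact absurd ⟨_, adjoin_mem_treeOf hsel hp hs a, FPF.lt_adjoin (hsel p a hs)⟩ hmax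
  · rintro ⟨t, ht, hpt⟩
    obtain ⟨n, hn⟩ := exists_walk_eq_of_agrees hsel hp ((FPF.agrees_toFun t).mono hpt.le)
    obtain ⟨m, hm⟩ := exists_walk_eq_of_agrees hsel ht (FPF.agrees_toFun t)
    have hle : walk sel t.toFun m ≤ walk sel t.toFun n := by
      rcases le_total m n with hmn | hnm
      · exact monotone_walk hmn
      · rw [walk_eq_of_sel_eq_none (hn ▸ hnone) hnm]
    exact ((hn.trans_lt hpt).trans_eq hm.symm).not_ge hle

theorem isTotalSeqTree_treeOf : IsTotalSeqTree (treeOf sel) := by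
  refine ⟨⟨⟨id, 0, rfl⟩, fun p _ => FPF.empty_le p, fun P _ s hs t ht _ => ?_⟩,
    fun p hp hleaf => ?_⟩
  · obtain ⟨n, rfl⟩ := exists_walk_eq_of_agrees hsel hs.1 ((FPF.agrees_toFun P).mono hs.2)
    obtain ⟨m, rfl⟩ := exists_walk_eq_of_agrees hsel ht.1 ((FPF.agrees_toFun P).mono ht.2)
    rcases le_total n m with h | h
    exacts [Or.inl (monotone_walk h), Or.inr (monotone_walk h)]
  · obtain ⟨a, ha⟩ := Option.ne_none_iff_exists'.1 fun h =>
      hleaf ((isLeaf_treeOf_iff hsel).2 ⟨hp, h⟩)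
    exact ⟨a, hsel p a ha, fun t => immSucc_treeOf_iff hsel hp ha⟩

theorem exists_isLeaf_treeOf_iff (F : FPF A → A) (c : A) :
    (∃ v, IsLeaf (treeOf sel) v ∧ agrees β v ∧ F v = c) ↔ walkValue sel F β c := by
  simp only [isLeaf_treeOf_iff hsel]
  constructor
  · rintro ⟨v, ⟨hv, hnone⟩, hβ, rfl⟩
    obtain ⟨n, rfl⟩ := exists_walk_eq_of_agrees hsel hv hβ
    exact ⟨n, hnone, rfl⟩
  · rintro ⟨n, hnone, rfl⟩
    exact ⟨_, ⟨⟨β, n, rfl⟩, hnone⟩, agrees_walk hsel n, rfl⟩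

end TreeOf

section TreeSel

def treeSel (T : Set (FPF A)) (p : FPF A) : Option A :=
  if h : ∃ a ∉ p.dom, ∀ t, ImmSucc T p t ↔ p < t ∧ t.dom = insert a p.dom then
    some h.choose
  else none

variable {T : Set (FPF A)} {p u v : FPF A} {a : A}

theorem treeSel_spec (h : treeSel T p = some a) :
    a ∉ p.dom ∧ ∀ t, ImmSucc T p t ↔ p < t ∧ t.dom = insert a p.dom := by
  unfold treeSel at h
  split_ifs at h with hex
  cases h
  exact hex.choose_spec

theorem queriesFresh_treeSel (T : Set (FPF A)) : QueriesFresh (treeSel T) :=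
  fun _ _ h => (treeSel_spec h).1

theorem exists_treeSel_eq_some_mem_dom (hT : IsTotalSeqTree T) (hu : u ∈ T) (hv : v ∈ T)
    (huv : u < v) : ∃ a, treeSel T u = some a ∧ a ∈ v.dom := by
  obtain ⟨a, ha, hsucc⟩ := hT.2 u hu fun hleaf => hleaf.2 ⟨v, hv, huv⟩
  have hsel : treeSel T u = some _ := dif_pos ⟨a, ha, hsucc⟩
  -- a minimal node strictly between `u` and `v` is an immediate successor of `u`
  obtain ⟨w, ⟨hwT, huw, hwv⟩, hmin⟩ :=
    ((FPF.finite_Iic v).subset fun t ht => ht.2.2).exists_minimal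
      (⟨v, hv, huv, le_rfl⟩ : {t | t ∈ T ∧ u < t ∧ t ≤ v}.Nonempty)
  have himm : ImmSucc T u w := ⟨hwT, huw, fun ⟨t, htT, hut, htw⟩ =>
    htw.not_ge (hmin ⟨htT, hut, htw.le.trans hwv⟩ htw.le)⟩
  refine ⟨_, hsel, FPF.dom_mono hwv ?_⟩
  rw [((treeSel_spec hsel).2 w |>.1 himm).2]
  exact Set.mem_insert _ _

theorem walk_treeSel_mem (hT : IsTotalSeqTree T) (β : A → A) :
    ∀ n, walk (treeSel T) β n ∈ T
  | 0 => hT.1.1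
  | n + 1 => by
    show step _ _ β ∈ T
    rcases hs : treeSel T (walk (treeSel T) β n) with _ | a
    · rw [step_of_none hs]
      exact walk_treeSel_mem hT β n
    · have ha := (treeSel_spec hs).1
      rw [step_of_some hs]
      exact (((treeSel_spec hs).2 _).2 ⟨FPF.lt_adjoin ha, FPF.dom_adjoin ha⟩).1

theorem treeOf_treeSel (hT : IsTotalSeqTree T) : treeOf (treeSel T) = T := by
  refine Set.Subset.antisymm (fun _ ⟨β, n, h⟩ => h ▸ walk_treeSel_mem hT β n) fun v hv => ?_
  set δ := v.toFun
  by_contra hnot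
  -- otherwise the walk of `δ` would stay strictly below `v` forever
  have hlt : ∀ n, walk (treeSel T) δ n < v := by
    intro n
    induction n with
    | zero => exact (FPF.empty_le v).lt_of_ne fun h => hnot ⟨δ, 0, h⟩
    | succ n ih =>
      obtain ⟨a, hs, hav⟩ := exists_treeSel_eq_some_mem_dom hT (walk_treeSel_mem hT δ n) hv ih
      refine lt_of_le_of_ne ?_ fun h => hnot ⟨δ, n + 1, h⟩
      obtain ⟨x, hx⟩ := FPF.mem_dom_iff.1 hav
      have hδ : δ a = x := FPF.agrees_toFun v hx
      show step _ _ δ ≤ v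
      rw [step_of_some hs, ← Subtype.coe_le_coe, FPF.adjoin_val (treeSel_spec hs).1, hδ]
      exact Set.insert_subset hx ih.le
  have hbranch n := exists_treeSel_eq_some_mem_dom hT (walk_treeSel_mem hT δ n) hv (hlt n)
  obtain ⟨n, hn⟩ := exists_sel_walk_eq_none (queriesFresh_treeSel T) v.dom_finite
    fun n a ha => by
      obtain ⟨b, hb, hbv⟩ := hbranch n
      exact Option.some.inj (ha.symm.trans hb) ▸ hbv
  obtain ⟨a, ha, -⟩ := hbranch n
  exact Option.some_ne_none a (ha.symm.trans hn)

end TreeSel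

theorem seqRel_iff_exists_queriesFresh {Φ : (A → A) → A → Prop} :
    SeqRel Φ ↔ ∃ (sel : FPF A → Option A) (F : FPF A → A),
      QueriesFresh sel ∧ Φ = walkValue sel F := by
  constructor
  · rintro ⟨T, F, hT, hΦ⟩
    refine ⟨treeSel T, F, queriesFresh_treeSel T, funext₂ fun β c => propext ?_⟩
    rw [hΦ, ← exists_isLeaf_treeOf_iff (queriesFresh_treeSel T), treeOf_treeSel hT]
  · rintro ⟨sel, F, hsel, rfl⟩
    exact ⟨treeOf sel, F, isTotalSeqTree_treeOf hsel, fun β c =>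
      (exists_isLeaf_treeOf_iff hsel F c).symm⟩

section Interrogation

variable (mk : List A → A) (qp rp α : A → A)

def InterrogRel (R : A → A → Prop) (L : List A) : Prop :=
  ∀ j (hj : j < L.length), ∃ b, α (mk (L.take j)) = qp b ∧ R b (L[j]'hj)

variable {mk qp rp α} {β : A → A} {L M : List A}

theorem interrog_iff_interrogRel :
    Interrog mk qp α β L ↔ InterrogRel mk qp α (fun b x => β b = x) L := Iff.rfl

theorem InterrogRel.mono {R R' : A → A → Prop} (hRR' : ∀ ⦃b x⦄, R b x → R' b x)
    (h : InterrogRel mk qp α R L) : InterrogRel mk qp α R' L :=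
  fun j hj => (h j hj).imp fun _ hb => ⟨hb.1, hRR' hb.2⟩

theorem interrogRel_append_singleton {R : A → A → Prop} {x : A} :
    InterrogRel mk qp α R (L ++ [x]) ↔
      InterrogRel mk qp α R L ∧ ∃ b, α (mk L) = qp b ∧ R b x := by
  constructor
  · intro h
    refine ⟨fun j hj => ?_, by simpa using h L.length (by simp)⟩
    obtain ⟨b, hb, hR⟩ := h j (by simp; omega)
    rw [List.take_append_of_le_length hj.le, List.getElem_append_left hj] at *
    exact ⟨b, hb, hR⟩
  · rintro ⟨h, b, hb, hR⟩ j hj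
    rcases (show j < L.length ∨ j = L.length by simp at hj; omega) with hj' | rfl
    · rw [List.take_append_of_le_length hj'.le, List.getElem_append_left hj']
      exact h j hj'
    · simpa using ⟨b, hb, hR⟩

theorem Interrog.prefix_or_prefix (hqp : qp.Injective) (hL : Interrog mk qp α β L)
    (hM : Interrog mk qp α β M) : L <+: M ∨ M <+: L := by
  have key : ∀ j, j ≤ L.length → j ≤ M.length → L.take j = M.take j := by
    intro j
    induction j with
    | zero => simp
    | succ j ih =>
      intro (hjL : j < L.length) (hjM : j < M.length)
      obtain ⟨b, hb, hβb⟩ := hL j hjL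
      obtain ⟨b', hb', hβb'⟩ := hM j hjM
      rw [ih hjL.le hjM.le, hb'] at hb
      rw [List.take_add_one, List.take_add_one, ih hjL.le hjM.le, List.getElem?_eq_getElem hjL,
        List.getElem?_eq_getElem hjM, ← hβb, ← hβb', hqp hb]
  rcases le_total L.length M.length with h | h
  · exact Or.inl (List.prefix_iff_eq_take.2 (by rw [← key _ le_rfl h, List.take_length]))
  · exact Or.inr (List.prefix_iff_eq_take.2 (by rw [key _ h le_rfl, List.take_length]))

theorem Interrog.eq_of_prefix (hqr : ∀ x y, qp x ≠ rp y) (hM : Interrog mk qp α β M)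
    (hLM : L <+: M) {c : A} (hL : α (mk L) = rp c) : L = M := by
  refine hLM.eq_of_length (hLM.length_le.eq_of_not_lt fun hlt => ?_)
  obtain ⟨b, hb, -⟩ := hM L.length hlt
  rw [← List.prefix_iff_eq_take.1 hLM, hL] at hb
  exact hqr b c hb.symm

theorem Interrog.prefix_of_result (hqp : qp.Injective) (hqr : ∀ x y, qp x ≠ rp y)
    (hL : Interrog mk qp α β L) {c : A} (hc : α (mk L) = rp c) (hM : Interrog mk qp α β M) :
    M <+: L :=
  (hL.prefix_or_prefix hqp hM).elim (fun h => hM.eq_of_prefix hqr h hc ▸ List.prefix_rfl) id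

end Interrogation

section PhiSel

variable (mk : List A → A) (qp rp α : A → A)

def Asks (p : FPF A) (b : A) : Prop :=
  b ∉ p.dom ∧ ∃ L, InterrogRel mk qp α (fun a x => (a, x) ∈ p.val) L ∧ α (mk L) = qp b

def Returns (p : FPF A) (c : A) : Prop :=
  ∃ L, InterrogRel mk qp α (fun a x => (a, x) ∈ p.val) L ∧ α (mk L) = rp c

/-- Where `α` neither asks nor returns (it loops, or outputs a non-code), the strategy
queries fresh dummy arguments, so that no leaf arises. -/
def phiSel [Infinite A] (p : FPF A) : Option A :=
  if h : ∃ b, Asks mk qp α p b then some h.choose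
  else if ∃ c, Returns mk qp rp α p c then none else some p.fresh

def phiOut [Nonempty A] (p : FPF A) : A := Classical.epsilon (Returns mk qp rp α p)

variable {mk qp rp α}

theorem exists_asks_or_interrogRel {β : A → A} {p : FPF A} (hp : agrees β p) {L : List A}
    (hL : Interrog mk qp α β L) :
    (∃ b, Asks mk qp α p b) ∨ InterrogRel mk qp α (fun a x => (a, x) ∈ p.val) L := by
  induction L using List.reverseRecOn with
  | nil => exact Or.inr fun j hj => absurd hj (Nat.not_lt_zero j)
  | append_singleton L x ih =>
    rw [interrog_iff_interrogRel, interrogRel_append_singleton] at hL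
    obtain ⟨hL, b, hb, rfl⟩ := hL
    rcases ih hL with hask | hLp
    · exact Or.inl hask
    by_cases hbp : b ∈ p.dom
    · obtain ⟨y, hy⟩ := FPF.mem_dom_iff.1 hbp
      exact Or.inr (interrogRel_append_singleton.2 ⟨hLp, b, hb, by rwa [hp hy]⟩)
    · exact Or.inl ⟨b, hbp, L, hLp, hb⟩

variable [Infinite A]

theorem queriesFresh_phiSel : QueriesFresh (phiSel mk qp rp α) := by
  intro p a ha
  unfold phiSel at ha
  split_ifs at ha with hask
  · exact Option.some.inj ha ▸ hask.choose_spec.1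
  · exact Option.some.inj ha ▸ p.fresh_notMem

theorem returns_phiOut {p : FPF A} (h : phiSel mk qp rp α p = none) :
    Returns mk qp rp α p (phiOut mk qp rp α p) := by
  unfold phiSel at h
  split_ifs at h with _ hret
  exact Classical.epsilon_spec hret

theorem phiRel_eq_walkValue (hqp : qp.Injective) (hrp : rp.Injective)
    (hqr : ∀ x y, qp x ≠ rp y) (α : A → A) :
    phiRel mk qp rp α = walkValue (phiSel mk qp rp α) (phiOut mk qp rp α) := by
  have hsel := queriesFresh_phiSel (mk := mk) (qp := qp) (rp := rp) (α := α)
  ext β c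
  constructor
  · rintro ⟨L, hL, hc⟩
    have hquery : ∀ n a, phiSel mk qp rp α (walk (phiSel mk qp rp α) β n) = some a →
        a ∈ qp ⁻¹' ((fun M => α (mk M)) '' {M | M ∈ L.inits}) := by
      intro n a ha
      have hp := agrees_walk hsel (β := β) n
      unfold phiSel at ha
      split_ifs at ha with hask hret
      · obtain ⟨-, M, hM, hMa⟩ := hask.choose_spec
        refine ⟨M, (List.mem_inits M L).2 ?_, Option.some.inj ha ▸ hMa⟩
        exact hL.prefix_of_result hqp hqr hc (hM.mono hp)
      · rcases exists_asks_or_interrogRel hp hL with h | h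
        exacts [(hask h).elim, (hret ⟨c, L, h, hc⟩).elim]
    obtain ⟨n, hn⟩ := exists_sel_walk_eq_none hsel
      ((L.inits.finite_toSet.image _).preimage hqp.injOn) hquery
    obtain ⟨M, hM, hMc⟩ := returns_phiOut hn
    have hM : Interrog mk qp α β M := hM.mono (agrees_walk hsel n)
    refine ⟨n, hn, hrp ?_⟩
    rw [← hMc, ← hc, hL.eq_of_prefix hqr (hL.prefix_of_result hqp hqr hc hM) hMc]
  · rintro ⟨n, hn, rfl⟩
    obtain ⟨M, hM, hMc⟩ := returns_phiOut hn
    exact ⟨M, hM.mono (agrees_walk hsel n), hMc⟩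

end PhiSel

section OfSelector

variable (mk : List A → A) (qp rp : A → A) (sel : FPF A → Option A) (F : FPF A → A)

def ofSelector : A → A :=
  Function.extend mk (fun L => (sel (listWalk sel L)).elim (rp (F (listWalk sel L))) qp) id

variable {mk qp rp sel F}

theorem ofSelector_mk (hmk : mk.Injective) (L : List A) :
    ofSelector mk qp rp sel F (mk L) =
      (sel (listWalk sel L)).elim (rp (F (listWalk sel L))) qp :=
  hmk.extend_apply _ _ _

theorem listWalk_eq_walk (hmk : mk.Injective) (hqp : qp.Injective) (hqr : ∀ x y, qp x ≠ rp y)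
    {β : A → A} {L : List A} (hL : Interrog mk qp (ofSelector mk qp rp sel F) β L) :
    listWalk sel L = walk sel β L.length := by
  induction L using List.reverseRecOn with
  | nil => rfl
  | append_singleton L x ih =>
    rw [interrog_iff_interrogRel, interrogRel_append_singleton] at hL
    obtain ⟨hL, b, hb, rfl⟩ := hL
    rw [ofSelector_mk hmk] at hb
    rcases hs : sel (listWalk sel L) with _ | a <;> rw [hs] at hb
    · exact absurd hb.symm (hqr _ _)
    · obtain rfl := hqp hb
      rw [listWalk_append_singleton, List.length_append, List.length_singleton, walk, ← ih hL,
        step_of_some hs, step_of_some hs]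

theorem exists_interrog_listWalk_eq_walk (hmk : mk.Injective) (β : A → A) :
    ∀ n, ∃ L, Interrog mk qp (ofSelector mk qp rp sel F) β L ∧ listWalk sel L = walk sel β n
  | 0 => ⟨[], fun j hj => absurd hj (Nat.not_lt_zero j), rfl⟩
  | n + 1 => by
    obtain ⟨L, hL, hLn⟩ := exists_interrog_listWalk_eq_walk hmk β n
    rcases hs : sel (walk sel β n) with _ | a
    · exact ⟨L, hL, by rw [hLn, walk, step_of_none hs]⟩
    · refine ⟨L ++ [β a], interrogRel_append_singleton.2 ⟨hL, a, ?_, rfl⟩, ?_⟩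
      · rw [ofSelector_mk hmk, hLn, hs]
        rfl
      · rw [listWalk_append_singleton, hLn, walk, step_of_some hs, step_of_some hs]

theorem phiRel_ofSelector (hmk : mk.Injective) (hqp : qp.Injective) (hrp : rp.Injective)
    (hqr : ∀ x y, qp x ≠ rp y) :
    phiRel mk qp rp (ofSelector mk qp rp sel F) = walkValue sel F := by
  ext β c
  constructor
  · rintro ⟨L, hL, hc⟩
    rw [ofSelector_mk hmk, listWalk_eq_walk hmk hqp hqr hL] at hc
    rcases hs : sel (walk sel β L.length) with _ | a <;> rw [hs] at hc
    · exact ⟨L.length, hs, hrp hc⟩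
    · exact absurd hc (hqr _ _)
  · rintro ⟨n, hn, rfl⟩
    obtain ⟨L, hL, hLn⟩ := exists_interrog_listWalk_eq_walk hmk β n
    exact ⟨L, hL, by rw [ofSelector_mk hmk, hLn, hn]; rfl⟩

end OfSelector

/-- A partial function `A^A ⇀ A` is of the form `φ_α` for some
`α ∈ A^A` precisely when it is partial sequential. -/
theorem statement3 {A : Type u} [Infinite A] (code : List A → A)
    (hcode : Function.Injective code) (q r : A) (hqr : q ≠ r)
    (Φ : (A → A) → Option A) :
    (∃ α : A → A, ∀ (β : A → A) (b : A),
        Φ β = some b ↔ phiRel code (fun x => code [q, x]) (fun x => code [r, x]) α β b)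
    ↔ SeqRel (fun β b => Φ β = some b) := by
  have hqp : Function.Injective fun x => code [q, x] := fun x y h => by simpa using hcode h
  have hrp : Function.Injective fun x => code [r, x] := fun x y h => by simpa using hcode h
  have hqr' : ∀ x y, code [q, x] ≠ code [r, y] := fun x y h => hqr (List.cons.inj (hcode h)).1
  rw [seqRel_iff_exists_queriesFresh]
  constructor
  · rintro ⟨α, hα⟩
    exact ⟨_, _, queriesFresh_phiSel,
      (funext₂ fun β b => propext (hα β b)).trans (phiRel_eq_walkValue hqp hrp hqr' α)⟩
  · rintro ⟨sel, F, -, hΦ⟩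
    refine ⟨ofSelector code (fun x => code [q, x]) (fun x => code [r, x]) sel F, fun β b => ?_⟩
    rw [phiRel_ofSelector hcode hqp hrp hqr', ← hΦ]

end OostenK2
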